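/- arXiv:1205.1193 — 2 statements merged into one kernel-verified Lean document; each statement's English description precedes it below -/
import Mathlib

section
/- Let n ≥ 2 be an integer and let 1 ≤ p < ∞. There exists a constant C > 0 such that for every measurable function F : (1,∞) → [0,∞], (∫_0^∞ (∫_{cosh s}^∞ F(t) (t² − cosh²s)^{−1/2} dt)^p sinh^{n−2} s cosh s ds)^{1/p} ≤ C (∫_1^∞ F(t)^p (t² − 1)^{(n−2)/2} dt)^{1/p}. -/
/-!
Write `m = n - 2`. The substitution `u = cosh s` turns the left-hand side into
`∫_1^∞ (𝒜F u)^p (u² - 1)^((m-1)/2) u du`, where `𝒜F u = ∫_u^∞ F t (t² - u²)^(-1/2) dt`.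
Hölder's inequality against the test weight `t^(-b)` bounds `(𝒜F u)^p` by
`(∫_u^∞ t^(-b) (t² - u²)^(-1/2) dt)^(p-1) ∫_u^∞ F(t)^p t^(b(p-1)) (t² - u²)^(-1/2) dt`, and the
substitution `x = (u/t)²` evaluates the first integral as `u^(-b) B(b/2, 1/2) / 2`.
After exchanging the order of integration, the inner integral over `1 < u < t` is controlled by
`(t/u)^γ ≤ ((t² - 1)/(u² - 1))^(γ/2)` with `γ = b(p-1)`, and the substitution
`x = (u² - 1)/(t² - 1)` evaluates what is left as `(t² - 1)^(m/2)` times another Beta integral.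
-/

open MeasureTheory Set Real
open scoped ENNReal

theorem ENNReal.mul_eq_rpow_mul_rpow {p : ℝ} (hp : 1 ≤ p) (x y : ℝ≥0∞) {a : ℝ≥0∞}
    (ha0 : a ≠ 0) (hatop : a ≠ ⊤) :
    x * y = (a * y) ^ ((p - 1) / p) * (x ^ p * a ^ (1 - p) * y) ^ (1 / p) := by
  have hp0 : 0 < p := by linarith
  have hx : (x ^ p) ^ (1 / p) = x := by
    rw [← ENNReal.rpow_mul, mul_one_div_cancel hp0.ne', ENNReal.rpow_one]
  have ha : a ^ ((p - 1) / p) * (a ^ (1 - p)) ^ (1 / p) = 1 := by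
    rw [← ENNReal.rpow_mul, ← ENNReal.rpow_add _ _ ha0 hatop,
      show (p - 1) / p + (1 - p) * (1 / p) = 0 by ring, ENNReal.rpow_zero]
  have hy : y ^ ((p - 1) / p) * y ^ (1 / p) = y := by
    rw [← ENNReal.rpow_add_of_nonneg _ _ (div_nonneg (by linarith) hp0.le) (by positivity),
      ← add_div, sub_add_cancel, div_self hp0.ne', ENNReal.rpow_one]
  rw [ENNReal.mul_rpow_of_nonneg _ _ (div_nonneg (by linarith) hp0.le),
    ENNReal.mul_rpow_of_nonneg _ _ (by positivity), ENNReal.mul_rpow_of_nonneg _ _ (by positivity),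
    hx]
  calc x * y = x * (a ^ ((p - 1) / p) * (a ^ (1 - p)) ^ (1 / p)) *
      (y ^ ((p - 1) / p) * y ^ (1 / p)) := by rw [ha, hy, mul_one]
    _ = _ := by ring

theorem lintegral_mul_rpow_le_of_weight {α : Type*} [MeasurableSpace α] {μ : Measure α} {p : ℝ}
    (hp : 1 ≤ p) {f g φ : α → ℝ≥0∞} (hf : AEMeasurable f μ) (hg : AEMeasurable g μ)
    (hφ : AEMeasurable φ μ) (hφ0 : ∀ᵐ x ∂μ, φ x ≠ 0) (hφtop : ∀ᵐ x ∂μ, φ x ≠ ⊤) :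
    (∫⁻ x, f x * g x ∂μ) ^ p ≤
      (∫⁻ x, φ x * g x ∂μ) ^ (p - 1) * ∫⁻ x, f x ^ p * φ x ^ (1 - p) * g x ∂μ := by
  have hp0 : 0 < p := by linarith
  have hsplit : ∫⁻ x, f x * g x ∂μ =
      ∫⁻ x, (φ x * g x) ^ ((p - 1) / p) * (f x ^ p * φ x ^ (1 - p) * g x) ^ (1 / p) ∂μ := by
    refine lintegral_congr_ae ?_
    filter_upwards [hφ0, hφtop] with x h0 htop
    exact ENNReal.mul_eq_rpow_mul_rpow hp _ _ h0 htop
  have hHolder : ∫⁻ x, (φ x * g x) ^ ((p - 1) / p) * (f x ^ p * φ x ^ (1 - p) * g x) ^ (1 / p) ∂μ ≤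
      (∫⁻ x, φ x * g x ∂μ) ^ ((p - 1) / p) * (∫⁻ x, f x ^ p * φ x ^ (1 - p) * g x ∂μ) ^ (1 / p) :=
    ENNReal.lintegral_mul_norm_pow_le (hφ.mul hg)
      (((hf.pow_const p).mul (hφ.pow_const (1 - p))).mul hg) (div_nonneg (sub_nonneg.2 hp) hp0.le)
      (by positivity) (by rw [← add_div, sub_add_cancel, div_self hp0.ne'])
  calc (∫⁻ x, f x * g x ∂μ) ^ p
      ≤ ((∫⁻ x, φ x * g x ∂μ) ^ ((p - 1) / p) *
          (∫⁻ x, f x ^ p * φ x ^ (1 - p) * g x ∂μ) ^ (1 / p)) ^ p := by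
        rw [hsplit]; exact ENNReal.rpow_le_rpow hHolder hp0.le
    _ = _ := by
        rw [ENNReal.mul_rpow_of_nonneg _ _ hp0.le, ← ENNReal.rpow_mul, ← ENNReal.rpow_mul,
          div_mul_cancel₀ _ hp0.ne', one_div_mul_cancel hp0.ne', ENNReal.rpow_one]

theorem lintegral_Ioi_lintegral_Ioi_swap {μ : Measure ℝ} [SFinite μ] (a : ℝ)
    {G : ℝ → ℝ → ℝ≥0∞} (hG : Measurable (Function.uncurry G)) :
    ∫⁻ u in Ioi a, ∫⁻ t in Ioi u, G u t ∂μ ∂μ = ∫⁻ t in Ioi a, ∫⁻ u in Ioo a t, G u t ∂μ ∂μ := by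
  have hinner : ∀ u ∈ Ioi a, ∫⁻ t in Ioi u, G u t ∂μ =
      ∫⁻ t in Ioi a, (Ioi u).indicator (G u) t ∂μ := fun u hu => by
    rw [lintegral_indicator measurableSet_Ioi, Measure.restrict_restrict measurableSet_Ioi,
      inter_eq_left.2 (Ioi_subset_Ioi (le_of_lt hu))]
  rw [setLIntegral_congr_fun measurableSet_Ioi hinner, lintegral_lintegral_swap]
  · refine lintegral_congr fun t => ?_
    have hflip : ∀ u, (Ioi u).indicator (G u) t = (Iio t).indicator (fun u => G u t) u := by
      intro u; by_cases h : u < t <;> simp [h]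
    simp_rw [hflip]
    rw [lintegral_indicator measurableSet_Iio, Measure.restrict_restrict measurableSet_Iio,
      inter_comm, Ioi_inter_Iio]
  · exact (hG.indicator (measurableSet_lt measurable_fst measurable_snd)).aemeasurable

theorem cosh_image_Ioi : cosh '' Ioi 0 = Ioi 1 := by
  ext u
  constructor
  · rintro ⟨s, hs, rfl⟩
    exact one_lt_cosh.2 (ne_of_gt hs)
  · intro hu
    exact ⟨arcosh u, arcosh_pos hu, cosh_arcosh (le_of_lt hu)⟩

theorem lintegral_comp_cosh_mul_sinh_pow (G : ℝ → ℝ≥0∞) (m : ℕ) :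
    ∫⁻ s in Ioi 0, G (cosh s) * ENNReal.ofReal (sinh s ^ m * cosh s) =
      ∫⁻ u in Ioi 1, G u * ENNReal.ofReal ((u ^ 2 - 1) ^ (((m : ℝ) - 1) / 2) * u) := by
  rw [← cosh_image_Ioi, lintegral_image_eq_lintegral_deriv_mul_of_monotoneOn measurableSet_Ioi
    (fun s _ => (hasDerivAt_cosh s).hasDerivWithinAt)
    (cosh_strictMonoOn.monotoneOn.mono Ioi_subset_Ici_self)]
  refine setLIntegral_congr_fun measurableSet_Ioi fun s hs => ?_
  have hsinh : 0 < sinh s := sinh_pos_iff.2 hs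
  have hpow : sinh s ^ m = sinh s * (cosh s ^ 2 - 1) ^ (((m : ℝ) - 1) / 2) := by
    rw [cosh_sq', add_sub_cancel_left, ← rpow_natCast, ← rpow_natCast (sinh s) 2,
      ← rpow_mul hsinh.le]
    conv_lhs => rw [show (m : ℝ) = 1 + (2 : ℕ) * (((m : ℝ) - 1) / 2) by push_cast; ring,
      rpow_add hsinh, rpow_one]
  rw [hpow, mul_assoc, ENNReal.ofReal_mul hsinh.le]
  ring

noncomputable def betaLIntegral (a b : ℝ) : ℝ≥0∞ :=
  ∫⁻ x in Ioo 0 1, ENNReal.ofReal (x ^ (a - 1) * (1 - x) ^ (b - 1))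

theorem betaLIntegral_lt_top {a b : ℝ} (ha : 0 < a) (hb : 0 < b) : betaLIntegral a b < ⊤ := by
  have hint : IntegrableOn (fun x : ℝ => (x : ℂ) ^ ((a : ℂ) - 1) * (1 - (x : ℂ)) ^ ((b : ℂ) - 1))
      (Ioc 0 1) :=
    (intervalIntegrable_iff_integrableOn_Ioc_of_le zero_le_one).1
      (Complex.betaIntegral_convergent (by simpa using ha) (by simpa using hb))
  refine lt_of_le_of_lt (le_of_eq ?_) (hint.mono_set Ioo_subset_Ioc_self).hasFiniteIntegral
  refine setLIntegral_congr_fun measurableSet_Ioo fun x hx => ?_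
  have h1x : (1 : ℂ) - x = ((1 - x : ℝ) : ℂ) := by push_cast; ring
  rw [← ofReal_norm, norm_mul, h1x, Complex.norm_cpow_eq_rpow_re_of_pos hx.1,
    Complex.norm_cpow_eq_rpow_re_of_pos (sub_pos.2 hx.2)]
  simp

noncomputable def abelKernel (u t : ℝ) : ℝ≥0∞ := ENNReal.ofReal ((t ^ 2 - u ^ 2) ^ (-(1 : ℝ) / 2))

/-- `abelTransform F (cosh s)` is the transform `A₁⁻ F (s)` of the statement. -/
noncomputable def abelTransform (F : ℝ → ℝ≥0∞) (u : ℝ) : ℝ≥0∞ :=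
  ∫⁻ t in Ioi u, F t * abelKernel u t

theorem measurable_abelKernel : Measurable (Function.uncurry abelKernel) := by
  unfold abelKernel Function.uncurry; fun_prop

theorem div_sq_image_Ioi {u : ℝ} (hu : 0 < u) : (fun t => (u / t) ^ 2) '' Ioi u = Ioo 0 1 := by
  ext x
  constructor
  · rintro ⟨t, ht, rfl⟩
    have ht0 : 0 < t := hu.trans ht
    exact ⟨by positivity, pow_lt_one₀ (by positivity) ((div_lt_one ht0).2 ht) two_ne_zero⟩
  · rintro ⟨hx0, hx1⟩
    have hs : 0 < √x := sqrt_pos.2 hx0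
    refine ⟨u / √x, (lt_div_iff₀ hs).2 ?_, ?_⟩
    · simpa using mul_lt_mul_of_pos_left ((sqrt_lt' one_pos).2 (by rwa [one_pow])) hu
    · simp only
      rw [div_div_eq_mul_div, mul_div_cancel_left₀ _ hu.ne', sq_sqrt hx0.le]

theorem lintegral_Ioo_zero_one_eq_lintegral_Ioi {u : ℝ} (hu : 0 < u) (h : ℝ → ℝ≥0∞) :
    ∫⁻ x in Ioo 0 1, h x = ∫⁻ t in Ioi u, ENNReal.ofReal (2 * u ^ 2 / t ^ 3) * h ((u / t) ^ 2) := by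
  have hanti : AntitoneOn (fun t : ℝ => (u / t) ^ 2) (Ioi u) := fun s hs t _ hst => by
    have hs0 : 0 < s := hu.trans hs
    exact pow_le_pow_left₀ (div_nonneg hu.le (hs0.trans_le hst).le)
      (div_le_div_of_nonneg_left hu.le hs0 hst) 2
  have hderiv : ∀ t ∈ Ioi u,
      HasDerivWithinAt (fun t : ℝ => (u / t) ^ 2) (-(2 * u ^ 2 / t ^ 3)) (Ioi u) t := fun t ht => by
    have ht0 : t ≠ 0 := (hu.trans ht).ne'
    refine (((hasDerivAt_const t u).fun_div (hasDerivAt_id' t) ht0).fun_pow 2).hasDerivWithinAt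
      |>.congr_deriv ?_
    norm_num
    field_simp
  rw [← div_sq_image_Ioi hu,
    lintegral_image_eq_lintegral_deriv_mul_of_antitoneOn measurableSet_Ioi hderiv hanti]
  simp only [neg_neg]

theorem lintegral_Ioo_zero_one_eq_lintegral_Ioo {t : ℝ} (ht : 1 < t) (h : ℝ → ℝ≥0∞) :
    ∫⁻ x in Ioo 0 1, h x = ∫⁻ u in Ioo 1 t,
      ENNReal.ofReal (2 * u / (t ^ 2 - 1)) * h ((u ^ 2 - 1) / (t ^ 2 - 1)) := by
  have hD : 0 < t ^ 2 - 1 := by nlinarith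
  have hmono : StrictMonoOn (fun u : ℝ => (u ^ 2 - 1) / (t ^ 2 - 1)) (Icc 1 t) :=
    fun a ha b _ hab => div_lt_div_of_pos_right (by nlinarith [ha.1]) hD
  have himage : (fun u : ℝ => (u ^ 2 - 1) / (t ^ 2 - 1)) '' Ioo 1 t = Ioo 0 1 := by
    rw [ContinuousOn.image_Ioo_of_strictMonoOn ht.le (by fun_prop) hmono, one_pow, sub_self,
      zero_div, div_self hD.ne']
  have hderiv : ∀ u ∈ Ioo 1 t, HasDerivWithinAt (fun u : ℝ => (u ^ 2 - 1) / (t ^ 2 - 1))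
      (2 * u / (t ^ 2 - 1)) (Ioo 1 t) u := fun u _ => by
    simpa using (((hasDerivAt_pow 2 u).sub_const 1).div_const (t ^ 2 - 1)).hasDerivWithinAt
  rw [← himage, lintegral_image_eq_lintegral_deriv_mul_of_monotoneOn measurableSet_Ioo hderiv
    (hmono.monotoneOn.mono Ioo_subset_Icc_self)]

theorem lintegral_rpow_neg_mul_abelKernel {u : ℝ} (hu : 0 < u) (b : ℝ) :
    ∫⁻ t in Ioi u, ENNReal.ofReal (t ^ (-b)) * abelKernel u t =
      ENNReal.ofReal (u ^ (-b)) * (2⁻¹ * betaLIntegral (b / 2) (1 / 2)) := by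
  have hpt : ∀ t ∈ Ioi u, ENNReal.ofReal (2 * u ^ 2 / t ^ 3) *
      ENNReal.ofReal (((u / t) ^ 2) ^ (b / 2 - 1) * (1 - (u / t) ^ 2) ^ ((1 : ℝ) / 2 - 1)) =
      ENNReal.ofReal (2 * u ^ b) * (ENNReal.ofReal (t ^ (-b)) * abelKernel u t) := by
    intro t (ht : u < t)
    have ht0 : 0 < t := hu.trans ht
    have htu : 0 < t ^ 2 - u ^ 2 := by nlinarith
    have hrest : 1 - (u / t) ^ 2 = (t ^ 2 - u ^ 2) / t ^ 2 := by field_simp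
    rw [abelKernel, ← ENNReal.ofReal_mul (by positivity),
      ← ENNReal.ofReal_mul (by positivity), ← ENNReal.ofReal_mul (by positivity)]
    congr 1
    have hut : 0 < u / t := div_pos hu ht0
    have h1 : ((u / t) ^ 2) ^ (b / 2 - 1) = u ^ b * t ^ (-b) * t ^ 2 / u ^ 2 := by
      rw [← rpow_natCast, ← rpow_mul hut.le, show ((2 : ℕ) : ℝ) * (b / 2 - 1) = b - 2 by
        push_cast; ring, rpow_sub hut, rpow_two, div_rpow hu.le ht0.le, rpow_neg ht0.le]
      field_simp
    have h2 : (1 - (u / t) ^ 2) ^ ((1 : ℝ) / 2 - 1) = (t ^ 2 - u ^ 2) ^ (-(1 : ℝ) / 2) * t := by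
      rw [hrest, div_rpow htu.le (sq_nonneg t), show (1 : ℝ) / 2 - 1 = -(1 / 2) by norm_num,
        show -(1 : ℝ) / 2 = -(1 / 2) by norm_num, rpow_neg (sq_nonneg t), ← sqrt_eq_rpow,
        sqrt_sq ht0.le]
      field_simp
    rw [h1, h2]
    field_simp
  rw [betaLIntegral, lintegral_Ioo_zero_one_eq_lintegral_Ioi hu,
    setLIntegral_congr_fun measurableSet_Ioi hpt, lintegral_const_mul' _ _ ENNReal.ofReal_ne_top,
    ← ENNReal.ofReal_ofNat 2, ← ENNReal.ofReal_inv_of_pos two_pos, ← mul_assoc, ← mul_assoc,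
    ← ENNReal.ofReal_mul (by positivity), ← ENNReal.ofReal_mul (by positivity)]
  have hone : u ^ (-b) * 2⁻¹ * (2 * u ^ b) = 1 := by
    rw [rpow_neg hu.le]; field_simp
  rw [hone, ENNReal.ofReal_one, one_mul]

theorem lintegral_Ioo_mul_abelKernel {t : ℝ} (ht : 1 < t) (c : ℝ) :
    ∫⁻ u in Ioo 1 t, ENNReal.ofReal ((u ^ 2 - 1) ^ c * u) * abelKernel u t =
      ENNReal.ofReal ((t ^ 2 - 1) ^ (c + 1 / 2)) * (2⁻¹ * betaLIntegral (c + 1) (1 / 2)) := by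
  rw [betaLIntegral, lintegral_Ioo_zero_one_eq_lintegral_Ioo ht]
  set D := t ^ 2 - 1 with hD_def
  have hD : 0 < D := by nlinarith
  have hpt : ∀ u ∈ Ioo 1 t, ENNReal.ofReal (2 * u / D) *
      ENNReal.ofReal (((u ^ 2 - 1) / D) ^ (c + 1 - 1) * (1 - (u ^ 2 - 1) / D) ^ ((1 : ℝ) / 2 - 1)) =
      ENNReal.ofReal (2 * D ^ (-(c + 1 / 2))) *
        (ENNReal.ofReal ((u ^ 2 - 1) ^ c * u) * abelKernel u t) := by
    rintro u ⟨hu1, hut⟩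
    have hu : 0 < u ^ 2 - 1 := by nlinarith
    have htu : 0 < t ^ 2 - u ^ 2 := by nlinarith
    have hrest : 1 - (u ^ 2 - 1) / D = (t ^ 2 - u ^ 2) / D := by field_simp; ring
    rw [abelKernel, ← ENNReal.ofReal_mul (by positivity), ← ENNReal.ofReal_mul (by positivity),
      ← ENNReal.ofReal_mul (by positivity)]
    congr 1
    rw [hrest, div_rpow hu.le hD.le, div_rpow htu.le hD.le, add_sub_cancel_right,
      show (1 / 2 - 1 : ℝ) = -(1 / 2) by norm_num, show -(1 : ℝ) / 2 = -(1 / 2) by norm_num,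
      rpow_neg hD.le, rpow_neg hD.le, rpow_add hD]
    clear_value D
    have : D ^ (1 / 2 : ℝ) ≠ 0 := by positivity
    have : D ^ c ≠ 0 := by positivity
    field_simp
    rw [← sqrt_eq_rpow, sq_sqrt hD.le]
  rw [setLIntegral_congr_fun measurableSet_Ioo hpt, lintegral_const_mul' _ _ ENNReal.ofReal_ne_top,
    ← ENNReal.ofReal_ofNat 2, ← ENNReal.ofReal_inv_of_pos two_pos, ← mul_assoc, ← mul_assoc,
    ← ENNReal.ofReal_mul (by positivity), ← ENNReal.ofReal_mul (by positivity)]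
  have hone : D ^ (c + 1 / 2) * 2⁻¹ * (2 * D ^ (-(c + 1 / 2))) = 1 := by
    rw [rpow_neg hD.le]; field_simp
  rw [hone, ENNReal.ofReal_one, one_mul]

theorem div_rpow_le_sq_sub_one_div_rpow {u t γ : ℝ} (hu : 1 < u) (hut : u ≤ t) (hγ : 0 ≤ γ) :
    (t / u) ^ γ ≤ ((t ^ 2 - 1) / (u ^ 2 - 1)) ^ (γ / 2) := by
  have hu0 : 0 < u := one_pos.trans hu
  have ht0 : 0 < t := hu0.trans_le hut
  have hsq : (t / u) ^ 2 ≤ (t ^ 2 - 1) / (u ^ 2 - 1) := by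
    rw [div_pow, div_le_div_iff₀ (by positivity) (by nlinarith)]
    nlinarith
  calc (t / u) ^ γ = ((t / u) ^ 2) ^ (γ / 2) := by
        rw [← rpow_natCast, ← rpow_mul (by positivity)]; congr 1; push_cast; ring
    _ ≤ _ := rpow_le_rpow (by positivity) hsq (by positivity)

theorem lintegral_Ioo_div_rpow_mul_abelKernel_le {t γ : ℝ} (ht : 1 < t) (hγ : 0 ≤ γ) (α : ℝ) :
    ∫⁻ u in Ioo 1 t, ENNReal.ofReal ((t / u) ^ γ * ((u ^ 2 - 1) ^ α * u)) * abelKernel u t ≤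
      ENNReal.ofReal ((t ^ 2 - 1) ^ (α + 1 / 2)) *
        (2⁻¹ * betaLIntegral (α - γ / 2 + 1) (1 / 2)) := by
  have hD : 0 < t ^ 2 - 1 := by nlinarith
  calc ∫⁻ u in Ioo 1 t, ENNReal.ofReal ((t / u) ^ γ * ((u ^ 2 - 1) ^ α * u)) * abelKernel u t
      ≤ ∫⁻ u in Ioo 1 t, ENNReal.ofReal ((t ^ 2 - 1) ^ (γ / 2)) *
          (ENNReal.ofReal ((u ^ 2 - 1) ^ (α - γ / 2) * u) * abelKernel u t) := by
        refine setLIntegral_mono' measurableSet_Ioo fun u ⟨hu1, hut⟩ => ?_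
        have hu : 0 < u ^ 2 - 1 := by nlinarith
        rw [← mul_assoc (ENNReal.ofReal _), ← ENNReal.ofReal_mul (by positivity)]
        gcongr ENNReal.ofReal ?_ * _
        calc (t / u) ^ γ * ((u ^ 2 - 1) ^ α * u)
            ≤ ((t ^ 2 - 1) / (u ^ 2 - 1)) ^ (γ / 2) * ((u ^ 2 - 1) ^ α * u) := by
              gcongr
              exact div_rpow_le_sq_sub_one_div_rpow hu1 hut.le hγ
          _ = (t ^ 2 - 1) ^ (γ / 2) * ((u ^ 2 - 1) ^ (α - γ / 2) * u) := by
              rw [div_rpow hD.le hu.le, rpow_sub hu]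
              field_simp
    _ = ENNReal.ofReal ((t ^ 2 - 1) ^ (α + 1 / 2)) *
          (2⁻¹ * betaLIntegral (α - γ / 2 + 1) (1 / 2)) := by
        rw [lintegral_const_mul' _ _ ENNReal.ofReal_ne_top, lintegral_Ioo_mul_abelKernel ht,
          ← mul_assoc, ← ENNReal.ofReal_mul (by positivity), ← rpow_add hD]
        ring_nf

theorem abelTransform_rpow_le {F : ℝ → ℝ≥0∞} (hF : Measurable F) {u p : ℝ} (hu : 0 < u)
    (hp : 1 ≤ p) (b : ℝ) :
    abelTransform F u ^ p ≤ (2⁻¹ * betaLIntegral (b / 2) (1 / 2)) ^ (p - 1) *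
      ∫⁻ t in Ioi u, F t ^ p * ENNReal.ofReal ((t / u) ^ (b * (p - 1))) * abelKernel u t := by
  have hpos : ∀ᵐ t ∂volume.restrict (Ioi u), 0 < t :=
    ae_restrict_of_forall_mem measurableSet_Ioi fun t ht => hu.trans ht
  have hHolder := lintegral_mul_rpow_le_of_weight (μ := volume.restrict (Ioi u)) hp
    (g := abelKernel u) hF.aemeasurable measurable_abelKernel.of_uncurry_left.aemeasurable
    (φ := fun t => ENNReal.ofReal (t ^ (-b))) (by fun_prop)
    (by filter_upwards [hpos] with t ht; exact (ENNReal.ofReal_pos.2 (by positivity)).ne')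
    (ae_of_all _ fun _ => ENNReal.ofReal_ne_top)
  rw [lintegral_rpow_neg_mul_abelKernel hu] at hHolder
  refine hHolder.trans_eq ?_
  rw [ENNReal.mul_rpow_of_nonneg _ _ (by linarith), mul_comm (ENNReal.ofReal _ ^ _), mul_assoc,
    ← lintegral_const_mul' _ _ (by finiteness)]
  refine congrArg _ (setLIntegral_congr_fun measurableSet_Ioi fun t ht => ?_)
  have ht0 : 0 < t := hu.trans ht
  have hexp : (u ^ (-b)) ^ (p - 1) * (t ^ (-b)) ^ (1 - p) = (t / u) ^ (b * (p - 1)) := by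
    rw [← rpow_mul hu.le, ← rpow_mul ht0.le, div_rpow ht0.le hu.le,
      show -b * (1 - p) = b * (p - 1) by ring, show -b * (p - 1) = -(b * (p - 1)) by ring,
      rpow_neg hu.le, div_eq_mul_inv, mul_comm]
  rw [ENNReal.ofReal_rpow_of_pos (by positivity), ENNReal.ofReal_rpow_of_pos (by positivity),
    ← hexp, ENNReal.ofReal_mul (by positivity)]
  ring

theorem lintegral_Ioi_lintegral_Ioi_abelKernel_le {F : ℝ → ℝ≥0∞} (hF : Measurable F) {γ : ℝ}
    (hγ : 0 ≤ γ) (α : ℝ) :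
    ∫⁻ u in Ioi 1, (∫⁻ t in Ioi u, F t * ENNReal.ofReal ((t / u) ^ γ) * abelKernel u t) *
        ENNReal.ofReal ((u ^ 2 - 1) ^ α * u) ≤
      2⁻¹ * betaLIntegral (α - γ / 2 + 1) (1 / 2) *
        ∫⁻ t in Ioi 1, F t * ENNReal.ofReal ((t ^ 2 - 1) ^ (α + 1 / 2)) := by
  have hkernel : ∀ t, Measurable fun u : ℝ =>
      ENNReal.ofReal ((t / u) ^ γ * ((u ^ 2 - 1) ^ α * u)) * abelKernel u t := fun t =>
    (by fun_prop : Measurable fun u : ℝ => ENNReal.ofReal ((t / u) ^ γ * ((u ^ 2 - 1) ^ α * u))).mul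
      measurable_abelKernel.of_uncurry_right
  let G : ℝ → ℝ → ℝ≥0∞ := fun u t =>
    F t * (ENNReal.ofReal ((t / u) ^ γ * ((u ^ 2 - 1) ^ α * u)) * abelKernel u t)
  have hG : Measurable (Function.uncurry G) := by
    have := measurable_abelKernel
    unfold Function.uncurry at this ⊢
    fun_prop
  calc ∫⁻ u in Ioi 1, (∫⁻ t in Ioi u, F t * ENNReal.ofReal ((t / u) ^ γ) * abelKernel u t) *
          ENNReal.ofReal ((u ^ 2 - 1) ^ α * u)
      = ∫⁻ u in Ioi 1, ∫⁻ t in Ioi u, G u t := by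
        refine setLIntegral_congr_fun measurableSet_Ioi fun u (hu : 1 < u) => ?_
        rw [← lintegral_mul_const' _ _ ENNReal.ofReal_ne_top]
        refine setLIntegral_congr_fun measurableSet_Ioi fun t (ht : u < t) => ?_
        simp only [G]
        rw [ENNReal.ofReal_mul (rpow_nonneg (div_pos (by linarith) (by linarith)).le γ)]
        ring
    _ = ∫⁻ t in Ioi 1, F t * ∫⁻ u in Ioo 1 t,
          ENNReal.ofReal ((t / u) ^ γ * ((u ^ 2 - 1) ^ α * u)) * abelKernel u t := by
        rw [lintegral_Ioi_lintegral_Ioi_swap 1 hG]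
        simp only [G, lintegral_const_mul _ (hkernel _)]
    _ ≤ ∫⁻ t in Ioi 1, F t * ENNReal.ofReal ((t ^ 2 - 1) ^ (α + 1 / 2)) *
          (2⁻¹ * betaLIntegral (α - γ / 2 + 1) (1 / 2)) := by
        refine setLIntegral_mono' measurableSet_Ioi fun t (ht : 1 < t) => ?_
        rw [mul_assoc]
        gcongr
        exact lintegral_Ioo_div_rpow_mul_abelKernel_le ht hγ α
    _ = _ := by
        rw [lintegral_mul_const _ (by fun_prop), mul_comm]

theorem lintegral_abelTransform_rpow_le {m p : ℝ} (hm : -1 < m) (hp : 1 ≤ p) :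
    ∃ C : ℝ≥0∞, C ≠ ⊤ ∧ ∀ F : ℝ → ℝ≥0∞, Measurable F →
      ∫⁻ u in Ioi 1, abelTransform F u ^ p * ENNReal.ofReal ((u ^ 2 - 1) ^ ((m - 1) / 2) * u) ≤
        C * ∫⁻ t in Ioi 1, F t ^ p * ENNReal.ofReal ((t ^ 2 - 1) ^ (m / 2)) := by
  have hp0 : 0 < p := by linarith
  -- The two Beta integrals below converge iff `0 < b < (m + 1) / (p - 1)`.
  set b := (m + 1) / (2 * p) with hb_def
  have hb : 0 < b := div_pos (by linarith) (by linarith)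
  have hγ : 0 ≤ b * (p - 1) := mul_nonneg hb.le (by linarith)
  have hc : 0 < (m - 1) / 2 - b * (p - 1) / 2 + 1 := by
    have : (m - 1) / 2 - b * (p - 1) / 2 + 1 = (m + 1) * (p + 1) / (4 * p) := by
      rw [hb_def]; field_simp; ring
    rw [this]; exact div_pos (by nlinarith) (by linarith)
  set A := 2⁻¹ * betaLIntegral (b / 2) (1 / 2)
  have hA : A ^ (p - 1) ≠ ⊤ := ENNReal.rpow_ne_top_of_nonneg (by linarith)
    (ENNReal.mul_ne_top (by simp) (betaLIntegral_lt_top (by positivity) (by norm_num)).ne)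
  refine ⟨A ^ (p - 1) * (2⁻¹ * betaLIntegral ((m - 1) / 2 - b * (p - 1) / 2 + 1) (1 / 2)),
    ENNReal.mul_ne_top hA (ENNReal.mul_ne_top (by simp) (betaLIntegral_lt_top hc (by norm_num)).ne),
    fun F hF => ?_⟩
  have hdual := lintegral_Ioi_lintegral_Ioi_abelKernel_le (hF.pow_const p) hγ ((m - 1) / 2)
  rw [show (m - 1) / 2 + 1 / 2 = m / 2 by ring] at hdual
  calc ∫⁻ u in Ioi 1, abelTransform F u ^ p * ENNReal.ofReal ((u ^ 2 - 1) ^ ((m - 1) / 2) * u)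
      ≤ ∫⁻ u in Ioi 1, A ^ (p - 1) * ((∫⁻ t in Ioi u,
          F t ^ p * ENNReal.ofReal ((t / u) ^ (b * (p - 1))) * abelKernel u t) *
            ENNReal.ofReal ((u ^ 2 - 1) ^ ((m - 1) / 2) * u)) := by
        refine setLIntegral_mono' measurableSet_Ioi fun u (hu : 1 < u) => ?_
        grw [abelTransform_rpow_le hF (by linarith) hp b, mul_assoc]
    _ ≤ _ := by
        rw [lintegral_const_mul' _ _ hA, mul_assoc]
        exact mul_le_mul_right hdual _

/-- `L^p` estimate for the Abel transform associated with the X-ray transform of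
radial functions on `ℍⁿ`: for `n ≥ 2` and `1 ≤ p < ∞` there is `C > 0` such that
for all measurable `F : (1,∞) → [0,∞]`,
`(∫_0^∞ (∫_{cosh s}^∞ F(t)(t² − cosh²s)^{−1/2} dt)^p sinh^{n−2} s cosh s ds)^{1/p}
  ≤ C (∫_1^∞ F(t)^p (t² − 1)^{(n−2)/2} dt)^{1/p}`. -/
theorem abel_hyperbolic_xray_Lp (n : ℕ) (hn : 2 ≤ n) (p : ℝ) (hp : 1 ≤ p) :
    ∃ C : ℝ, 0 < C ∧ ∀ F : ℝ → ℝ≥0∞, Measurable F →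
      (∫⁻ s in Set.Ioi (0 : ℝ),
          (∫⁻ t in Set.Ioi (Real.cosh s),
              F t * ENNReal.ofReal ((t ^ 2 - Real.cosh s ^ 2) ^ (-(1 : ℝ) / 2))) ^ p *
            ENNReal.ofReal (Real.sinh s ^ (n - 2) * Real.cosh s)) ^ (1 / p) ≤
        ENNReal.ofReal C *
          (∫⁻ t in Set.Ioi (1 : ℝ),
              F t ^ p * ENNReal.ofReal ((t ^ 2 - 1) ^ (((n : ℝ) - 2) / 2))) ^ (1 / p) := by
  obtain ⟨C, hC, hest⟩ := lintegral_abelTransform_rpow_le (m := ((n - 2 : ℕ) : ℝ))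
    (by linarith [(n - 2).cast_nonneg (α := ℝ)]) hp
  refine ⟨(C ^ (1 / p)).toReal + 1, by positivity, fun F hF => ?_⟩
  have hm : ((n : ℝ) - 2) / 2 = ((n - 2 : ℕ) : ℝ) / 2 := by rw [Nat.cast_sub hn]; norm_num
  have hp0 : 0 ≤ 1 / p := by positivity
  calc _ = (∫⁻ u in Ioi 1, abelTransform F u ^ p *
          ENNReal.ofReal ((u ^ 2 - 1) ^ ((((n - 2 : ℕ) : ℝ) - 1) / 2) * u)) ^ (1 / p) :=
        congrArg (· ^ (1 / p)) (lintegral_comp_cosh_mul_sinh_pow (abelTransform F · ^ p) (n - 2))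
    _ ≤ (C * ∫⁻ t in Ioi 1, F t ^ p * ENNReal.ofReal ((t ^ 2 - 1) ^ (((n : ℝ) - 2) / 2))) ^
          (1 / p) := by
        rw [hm]; exact ENNReal.rpow_le_rpow (hest F hF) hp0
    _ ≤ _ := by
        rw [ENNReal.mul_rpow_of_nonneg _ _ hp0]
        gcongr
        exact (ENNReal.le_ofReal_iff_toReal_le (ENNReal.rpow_ne_top_of_nonneg hp0 hC)
          (by positivity)).2 (by linarith)
end

section
/- Let n ≥ 2 and 1 ≤ d ≤ n−1 be integers. There exists a constant C > 0 such that for every measurable function g : (0,1) → [0,∞], sup_{θ ∈ (0,π/2)} (cos θ)^{2−d} ∫_0^{cos θ} g(u) (cos²θ − u²)^{(d−2)/2} du ≤ C ‖g‖_{L^{n/d,1}((0,1), (1−u²)^{(n−2)/2} du)}. -/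
open MeasureTheory Set Real
open scoped ENNReal

/-!
Write `c = cos θ`, `α = (d - 2) / 2`, `β = (n - 2) / 2` and `τ u = 1 - u / c`. Since
`c² - u² = c² τ (1 + u / c)`, the kernel `c^{2-d} (c² - u²)^α` is at most `2^|α| τ^α`, so the
left side is bounded by `2^|α| ∫ g dν` for the measure `ν = τ^α du` on `(0, c)`. By the layer-cake
formula it suffices to show `ν S ≤ K μ(S)^{d/n}` for every set `S`, `μ` being the sphere measure.
As `τ^β ≤ (1 - u²)^β`, this is a bathtub estimate: the part of `S` where `τ < σ` has `ν`-mass at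
most `σ^{α+1} / (α + 1)`, the rest at most `σ^{α-β} ∫_S τ^β`, and optimising in `σ` gives the
exponent `(α + 1) / (β + 1) = d / n`.
-/

/-- The Lorentz `L^{p,1}` norm of `f` with respect to the measure `μ`:
`‖f‖_{L^{p,1}(μ)} = p ∫_0^∞ μ({x : f x > λ})^{1/p} dλ`. -/
noncomputable def lorentzNorm (μ : Measure ℝ) (p : ℝ) (f : ℝ → ℝ≥0∞) : ℝ≥0∞ :=
  ENNReal.ofReal p *
    ∫⁻ l in Set.Ioi (0 : ℝ), (μ {t | ENNReal.ofReal l < f t}) ^ (1 / p)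

lemma volume_Ioi_inter_ofReal_lt (a : ℝ≥0∞) :
    volume (Ioi (0 : ℝ) ∩ {l | ENNReal.ofReal l < a}) = a := by
  rcases eq_or_ne a ∞ with rfl | ha
  · simp [ENNReal.ofReal_lt_top]
  · have : Ioi (0 : ℝ) ∩ {l | ENNReal.ofReal l < a} = Ioo 0 a.toReal := by
      ext l
      simp only [mem_inter_iff, mem_Ioi, mem_ofPred_eq, mem_Ioo, and_congr_right_iff]
      exact fun hl => ENNReal.ofReal_lt_iff_lt_toReal hl.le ha
    rw [this, Real.volume_Ioo, sub_zero, ENNReal.ofReal_toReal ha]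

lemma lintegral_eq_lintegral_meas_ofReal_lt {α : Type*} [MeasurableSpace α] (μ : Measure α)
    [SFinite μ] {f : α → ℝ≥0∞} (hf : Measurable f) :
    ∫⁻ x, f x ∂μ = ∫⁻ l in Ioi 0, μ {x | ENNReal.ofReal l < f x} := by
  have hS : MeasurableSet {p : α × ℝ | ENNReal.ofReal p.2 < f p.1} :=
    measurableSet_lt (ENNReal.measurable_ofReal.comp measurable_snd) (hf.comp measurable_fst)
  calc ∫⁻ x, f x ∂μ = ∫⁻ x, volume.restrict (Ioi 0) {l | ENNReal.ofReal l < f x} ∂μ := by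
        refine lintegral_congr fun x => ?_
        rw [Measure.restrict_apply' measurableSet_Ioi, inter_comm, volume_Ioi_inter_ofReal_lt]
    _ = _ := (Measure.prod_apply hS).symm.trans (Measure.prod_apply_symm hS)

lemma lintegral_le_mul_lorentzNorm {ν μ : Measure ℝ} [SFinite ν] {p K : ℝ} (hp : 0 < p)
    (hK : 0 ≤ K) (hν : ∀ s, MeasurableSet s → ν s ≤ ENNReal.ofReal K * μ s ^ (1 / p))
    {f : ℝ → ℝ≥0∞} (hf : Measurable f) :
    ∫⁻ x, f x ∂ν ≤ ENNReal.ofReal (K / p) * lorentzNorm μ p f := by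
  calc ∫⁻ x, f x ∂ν
      ≤ ∫⁻ l in Ioi 0, ENNReal.ofReal K * μ {x | ENNReal.ofReal l < f x} ^ (1 / p) := by
        rw [lintegral_eq_lintegral_meas_ofReal_lt ν hf]
        exact lintegral_mono fun l => hν _ (hf measurableSet_Ioi)
    _ = ENNReal.ofReal (K / p) * lorentzNorm μ p f := by
        rw [lintegral_const_mul' _ _ ENNReal.ofReal_ne_top, lorentzNorm, ← mul_assoc,
          ← ENNReal.ofReal_mul (div_nonneg hK hp.le), div_mul_cancel₀ K hp.ne']

lemma rpow_le_rpow_sub_mul_rpow {σ t α β : ℝ} (hσ : 0 < σ) (hσt : σ ≤ t) (hαβ : α ≤ β) :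
    t ^ α ≤ σ ^ (α - β) * t ^ β := by
  have ht : 0 < t := hσ.trans_le hσt
  calc t ^ α = t ^ (α - β) * t ^ β := by rw [← rpow_add ht, sub_add_cancel]
    _ ≤ σ ^ (α - β) * t ^ β := mul_le_mul_of_nonneg_right
      (rpow_le_rpow_of_nonpos hσ hσt (sub_nonpos.2 hαβ)) (rpow_nonneg ht.le β)

section Bathtub

variable {X : Type*} [MeasurableSpace X] {ν : Measure X} {τ : X → ℝ} {E : Set X} {α β K : ℝ}

lemma setLIntegral_rpow_le_add (hτ : Measurable τ) (hαβ : α ≤ β) {σ : ℝ} (hσ : 0 < σ)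
    (hlow : ∫⁻ x in E ∩ {x | τ x < σ}, ENNReal.ofReal (τ x ^ α) ∂ν ≤
      ENNReal.ofReal (K * σ ^ (α + 1))) :
    ∫⁻ x in E, ENNReal.ofReal (τ x ^ α) ∂ν ≤
      ENNReal.ofReal (K * σ ^ (α + 1)) +
        ENNReal.ofReal (σ ^ (α - β)) * ∫⁻ x in E, ENNReal.ofReal (τ x ^ β) ∂ν := by
  rw [← lintegral_inter_add_sdiff _ E (measurableSet_lt hτ measurable_const)]
  refine add_le_add hlow ?_
  rw [← lintegral_const_mul' _ _ ENNReal.ofReal_ne_top]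
  refine (setLIntegral_mono (by fun_prop) fun x hx => ?_).trans (lintegral_mono_set sdiff_subset)
  rw [← ENNReal.ofReal_mul (by positivity)]
  exact ENNReal.ofReal_le_ofReal (rpow_le_rpow_sub_mul_rpow hσ (not_lt.1 hx.2) hαβ)

lemma setLIntegral_rpow_le_rpow (hτ : Measurable τ) (hE : MeasurableSet E)
    (hτE : ∀ x ∈ E, 0 < τ x) (hα : 0 < α + 1) (hαβ : α ≤ β) (hK : 0 ≤ K)
    (hlow : ∀ σ > 0, ∫⁻ x in E ∩ {x | τ x < σ}, ENNReal.ofReal (τ x ^ α) ∂ν ≤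
      ENNReal.ofReal (K * σ ^ (α + 1))) :
    ∫⁻ x in E, ENNReal.ofReal (τ x ^ α) ∂ν ≤
      ENNReal.ofReal (1 + K) * (∫⁻ x in E, ENNReal.ofReal (τ x ^ β) ∂ν) ^ ((α + 1) / (β + 1)) := by
  set M := ∫⁻ x in E, ENNReal.ofReal (τ x ^ β) ∂ν with hM
  have hβ : 0 < β + 1 := by linarith
  rcases eq_or_ne M 0 with hM0 | hM0
  · have hE0 : ν E = 0 := by
      rw [hM, setLIntegral_eq_zero_iff hE (by fun_prop)] at hM0
      refine measure_eq_zero_iff_ae_notMem.2 (hM0.mono fun x hx hxE => ?_)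
      exact (ENNReal.ofReal_pos.2 (rpow_pos_of_pos (hτE x hxE) β)).ne' (hx hxE)
    simp [setLIntegral_measure_zero _ _ hE0]
  rcases eq_or_ne M ∞ with hMtop | hMtop
  · rw [hMtop, ENNReal.top_rpow_of_pos (div_pos hα hβ),
      ENNReal.mul_top (ENNReal.ofReal_ne_zero_iff.2 (by linarith))]
    exact le_top
  set m := M.toReal
  have hm : 0 < m := ENNReal.toReal_pos hM0 hMtop
  have hσ : 0 < m ^ (β + 1)⁻¹ := rpow_pos_of_pos hm _
  -- `σ = M ^ (β + 1)⁻¹` balances the two terms of `setLIntegral_rpow_le_add`.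
  refine (setLIntegral_rpow_le_add hτ hαβ hσ (hlow _ hσ)).trans_eq ?_
  rw [← hM, ← ENNReal.ofReal_toReal hMtop, ← ENNReal.ofReal_mul (rpow_nonneg hσ.le _),
    ← ENNReal.ofReal_add (by positivity) (by positivity), ENNReal.ofReal_rpow_of_pos hm,
    ← ENNReal.ofReal_mul (by linarith), ← rpow_mul hm.le, ← rpow_mul hm.le,
    ← rpow_add_one hm.ne']
  have hexp : (β + 1)⁻¹ * (α - β) + 1 = (β + 1)⁻¹ * (α + 1) := by
    field_simp
    ring
  rw [hexp, inv_mul_eq_div]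
  congr 1
  ring

end Bathtub

lemma lintegral_Ioo_one_sub_div_rpow {c σ α : ℝ} (hc : 0 < c) (hσ : 0 < σ) (hα : -1 < α) :
    ∫⁻ u in Ioo (c - c * σ) c, ENNReal.ofReal ((1 - u / c) ^ α) =
      ENNReal.ofReal (c * (σ ^ (α + 1) / (α + 1))) := by
  have hval : ∫ u in (c - c * σ)..c, (1 - u / c) ^ α = c * (σ ^ (α + 1) / (α + 1)) := by
    rw [intervalIntegral.integral_comp_sub_div (fun t => t ^ α) hc.ne', integral_rpow (Or.inl hα),
      div_self hc.ne', sub_self, zero_rpow (by linarith), sub_zero, smul_eq_mul]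
    congr 3
    field_simp
    ring
  have hle : c - c * σ ≤ c := by nlinarith
  have hint : IntervalIntegrable (fun u => (1 - u / c) ^ α) volume (c - c * σ) c :=
    intervalIntegral.intervalIntegrable_of_integral_ne_zero (by
      rw [hval]; exact (mul_pos hc (div_pos (rpow_pos_of_pos hσ _) (by linarith))).ne')
  rw [setLIntegral_congr Ioo_ae_eq_Ioc, ← ofReal_integral_eq_lintegral_ofReal
    ((intervalIntegrable_iff_integrableOn_Ioc_of_le hle).1 hint),
    ← intervalIntegral.integral_of_le hle, hval]
  filter_upwards [ae_restrict_mem measurableSet_Ioc] with u hu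
  exact rpow_nonneg (by rw [sub_nonneg, div_le_one hc]; exact hu.2) α

lemma setLIntegral_sublevel_one_sub_div_rpow_le {c σ α : ℝ} {E : Set ℝ} (hc : 0 < c) (hc1 : c ≤ 1)
    (hσ : 0 < σ) (hα : -1 < α) (hE : E ⊆ Ioo 0 c) :
    ∫⁻ u in E ∩ {u | 1 - u / c < σ}, ENNReal.ofReal ((1 - u / c) ^ α) ≤
      ENNReal.ofReal ((α + 1)⁻¹ * σ ^ (α + 1)) := by
  have hsub : E ∩ {u | 1 - u / c < σ} ⊆ Ioo (c - c * σ) c := fun u ⟨huE, huσ⟩ => by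
    have := mul_lt_mul_of_pos_left (show 1 - u / c < σ from huσ) hc
    rw [mul_one_sub, mul_div_cancel₀ u hc.ne'] at this
    exact ⟨by linarith, (hE huE).2⟩
  calc _ ≤ ∫⁻ u in Ioo (c - c * σ) c, ENNReal.ofReal ((1 - u / c) ^ α) := lintegral_mono_set hsub
    _ = ENNReal.ofReal (c * (σ ^ (α + 1) / (α + 1))) := lintegral_Ioo_one_sub_div_rpow hc hσ hα
    _ ≤ ENNReal.ofReal ((α + 1)⁻¹ * σ ^ (α + 1)) := by
      refine ENNReal.ofReal_le_ofReal ?_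
      rw [div_eq_inv_mul]
      exact mul_le_of_le_one_left
        (mul_nonneg (inv_nonneg.2 (by linarith)) (rpow_nonneg hσ.le _)) hc1

lemma one_add_rpow_le_two_rpow_abs {x α : ℝ} (hx0 : 0 ≤ x) (hx1 : x ≤ 1) : (1 + x) ^ α ≤ 2 ^ |α| :=
  calc (1 + x) ^ α ≤ (1 + x) ^ |α| := rpow_le_rpow_of_exponent_le (by linarith) (le_abs_self α)
    _ ≤ 2 ^ |α| := rpow_le_rpow (by linarith) (by linarith) (abs_nonneg α)

lemma rpow_neg_two_mul_sq_sub_sq_le {c u α : ℝ} (hu : 0 < u) (huc : u < c) :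
    c ^ (-(2 * α)) * (c ^ 2 - u ^ 2) ^ α ≤ 2 ^ |α| * (1 - u / c) ^ α := by
  have hc : 0 < c := hu.trans huc
  have hτ : 0 ≤ 1 - u / c := by rw [sub_nonneg, div_le_one hc]; exact huc.le
  have hfac : c ^ 2 - u ^ 2 = c ^ 2 * ((1 - u / c) * (1 + u / c)) := by field_simp; ring
  rw [hfac, mul_rpow (by positivity) (mul_nonneg hτ (by positivity)), mul_rpow hτ (by positivity),
    ← rpow_natCast, ← rpow_mul hc.le, ← mul_assoc, ← rpow_add hc, Nat.cast_ofNat, neg_add_cancel,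
    rpow_zero, one_mul, mul_comm (2 ^ |α|)]
  exact mul_le_mul_of_nonneg_left
    (one_add_rpow_le_two_rpow_abs (by positivity) ((div_le_one hc).2 huc.le)) (rpow_nonneg hτ α)

lemma one_sub_div_le_one_sub_sq {c u : ℝ} (hc1 : c ≤ 1) (hu : u ∈ Ioo 0 c) :
    1 - u / c ≤ 1 - u ^ 2 := by
  have hc : 0 < c := hu.1.trans hu.2
  have hu1 : u ≤ 1 := hu.2.le.trans hc1
  have : u ≤ u / c := le_div_self hu.1.le hc hc1
  nlinarith [hu.1]

lemma withDensity_one_sub_div_rpow_apply_le {c α β : ℝ} (hc : 0 < c) (hc1 : c ≤ 1) (hα : -1 < α)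
    (hαβ : α ≤ β) (hβ : 0 ≤ β) {s : Set ℝ} (hs : MeasurableSet s) :
    (volume.restrict (Ioo 0 c)).withDensity (fun u => ENNReal.ofReal ((1 - u / c) ^ α)) s ≤
      ENNReal.ofReal (1 + (α + 1)⁻¹) *
        (volume.restrict (Ioo 0 1)).withDensity (fun u => ENNReal.ofReal ((1 - u ^ 2) ^ β)) s ^
          ((α + 1) / (β + 1)) := by
  rw [withDensity_apply _ hs, withDensity_apply _ hs, Measure.restrict_restrict hs,
    Measure.restrict_restrict hs]
  have hτ : ∀ u ∈ s ∩ Ioo 0 c, 0 < 1 - u / c := fun u hu => by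
    rw [sub_pos, div_lt_one hc]; exact hu.2.2
  refine (setLIntegral_rpow_le_rpow (τ := fun u => 1 - u / c) (by fun_prop)
    (hs.inter measurableSet_Ioo) hτ (by linarith) hαβ (inv_nonneg.2 (by linarith))
    fun σ hσ => setLIntegral_sublevel_one_sub_div_rpow_le hc hc1 hσ hα inter_subset_right).trans ?_
  refine mul_le_mul_right (ENNReal.rpow_le_rpow ?_ (div_nonneg (by linarith) (by linarith))) _
  refine (setLIntegral_mono (by fun_prop) fun u hu => ENNReal.ofReal_le_ofReal ?_).trans
    (lintegral_mono_set (inter_subset_inter_right _ (Ioo_subset_Ioo_right hc1)))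
  exact rpow_le_rpow (hτ u hu).le (one_sub_div_le_one_sub_sq hc1 hu.2) hβ

lemma lintegral_abel_kernel_le {c α : ℝ} {g : ℝ → ℝ≥0∞} (hg : Measurable g) :
    ENNReal.ofReal (c ^ (-(2 * α))) * ∫⁻ u in Ioo 0 c, g u * ENNReal.ofReal ((c ^ 2 - u ^ 2) ^ α) ≤
      ENNReal.ofReal (2 ^ |α|) *
        ∫⁻ u, g u ∂(volume.restrict (Ioo 0 c)).withDensity
          (fun u => ENNReal.ofReal ((1 - u / c) ^ α)) := by
  rw [lintegral_withDensity_eq_lintegral_mul _ (by fun_prop) hg,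
    ← lintegral_const_mul' _ _ ENNReal.ofReal_ne_top,
    ← lintegral_const_mul' _ _ ENNReal.ofReal_ne_top]
  refine setLIntegral_mono' measurableSet_Ioo fun u hu => ?_
  calc ENNReal.ofReal (c ^ (-(2 * α))) * (g u * ENNReal.ofReal ((c ^ 2 - u ^ 2) ^ α))
      = g u * ENNReal.ofReal (c ^ (-(2 * α)) * (c ^ 2 - u ^ 2) ^ α) := by
        rw [ENNReal.ofReal_mul (rpow_nonneg (hu.1.trans hu.2).le _)]; ring
    _ ≤ g u * ENNReal.ofReal (2 ^ |α| * (1 - u / c) ^ α) :=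
        mul_le_mul_right (ENNReal.ofReal_le_ofReal (rpow_neg_two_mul_sq_sub_sq_le hu.1 hu.2)) _
    _ = _ := by rw [ENNReal.ofReal_mul (by positivity), Pi.mul_apply]; ring

/-- Endpoint estimate for the Abel transform associated with the `d`-dimensional
totally geodesic Radon transform of even radial functions on `Sⁿ`: for `n ≥ 2`,
`1 ≤ d ≤ n−1` there is `C > 0` such that for all measurable `g : (0,1) → [0,∞]`,
`sup_{θ ∈ (0,π/2)} (cos θ)^{2−d} ∫_0^{cos θ} g(u)(cos²θ − u²)^{(d−2)/2} du
  ≤ C ‖g‖_{L^{n/d,1}((0,1), (1−u²)^{(n−2)/2} du)}`. -/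
theorem abel_sphere_endpoint (n d : ℕ) (hn : 2 ≤ n) (hd : 1 ≤ d) (hdn : d ≤ n - 1) :
    ∃ C : ℝ, 0 < C ∧ ∀ g : ℝ → ℝ≥0∞, Measurable g →
      ∀ θ : ℝ, 0 < θ → θ < Real.pi / 2 →
        ENNReal.ofReal (Real.cos θ ^ ((2 : ℝ) - d)) *
            (∫⁻ u in Set.Ioo 0 (Real.cos θ),
              g u * ENNReal.ofReal ((Real.cos θ ^ 2 - u ^ 2) ^ (((d : ℝ) - 2) / 2))) ≤
          ENNReal.ofReal C *
            lorentzNorm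
              ((volume.restrict (Set.Ioo (0 : ℝ) 1)).withDensity
                (fun u => ENNReal.ofReal ((1 - u ^ 2) ^ (((n : ℝ) - 2) / 2))))
              ((n : ℝ) / d) g := by
  set α : ℝ := ((d : ℝ) - 2) / 2 with hα_def
  set β : ℝ := ((n : ℝ) - 2) / 2 with hβ_def
  have hd' : (1 : ℝ) ≤ d := by exact_mod_cast hd
  have hn' : (2 : ℝ) ≤ n := by exact_mod_cast hn
  have hdn' : (d : ℝ) ≤ n := by exact_mod_cast hdn.trans (Nat.sub_le n 1)
  have hα : -1 < α := by linarith
  have hαβ : α ≤ β := by linarith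
  have hβ : 0 ≤ β := by linarith
  have hp : 0 < (n : ℝ) / d := by positivity
  have hK : 0 < 1 + (α + 1)⁻¹ := by have := inv_pos.2 (by linarith : 0 < α + 1); linarith
  refine ⟨2 ^ |α| * ((1 + (α + 1)⁻¹) / ((n : ℝ) / d)), by positivity, fun g hg θ hθ0 hθ => ?_⟩
  have hc : 0 < cos θ := cos_pos_of_mem_Ioo ⟨by linarith, hθ⟩
  have hexp : (2 : ℝ) - d = -(2 * α) := by ring
  have hq : (α + 1) / (β + 1) = 1 / ((n : ℝ) / d) := by
    rw [show α + 1 = (d : ℝ) / 2 by ring, show β + 1 = (n : ℝ) / 2 by ring, one_div_div,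
      div_div_div_cancel_right₀ two_ne_zero]
  rw [hexp, ENNReal.ofReal_mul (by positivity), mul_assoc]
  refine (lintegral_abel_kernel_le hg).trans (mul_le_mul_right ?_ _)
  refine lintegral_le_mul_lorentzNorm hp hK.le (fun s hs => ?_) hg
  rw [← hq]
  exact withDensity_one_sub_div_rpow_apply_le hc (cos_le_one θ) hα hαβ hβ hs
end
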